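/- Explicit bound on the divergence between μ and the screened marginal (proof of Proposition 2): d_ρ(μ, μ^sc) ≤ n_b·c_κ·(max_i μ_i) + (n − n_b)·[ m_b·(max_j ν_j)/(n κ K_min) + (m − m_b)·ε² − (min_i μ_i) + (max_i μ_i)·log( κ(n − n_b + 1)(max_i μ_i)/(m_b K_min · min_{j∈J} ν_j) + n_b κ² (max_i μ_i)² / (m m_b ε² K_min² · min_{j∈J} ν_j) ) ], where c_κ = κ − log κ − 1, provided the argument of the logarithm is at least 1. -/

import Mathlib

/-!
Since the lower-bound constraints are inactive on `I` and `J`, moving one coordinate of the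
screened optimum in either direction stays feasible, so the first-order conditions hold there:
the row sums of `B(uˢᶜ, vˢᶜ)` equal `κ μᵢ` on `I` and its column sums equal `νⱼ / κ` on `J`.
On `I` the divergence term is then exactly `μᵢ (κ - log κ - 1)`. Off `I`, `e^{uᵢ} = ε / κ` is
pinned, which bounds `μˢᶜᵢ` from above. The row conditions bound `e^{uᵢ}` on `I`, hence
`S = ∑ᵢ e^{uᵢ}`, from above; the column conditions then bound `e^{vⱼ}` on `J` from below by
`νⱼ / (κ S)`, which gives a uniform lower bound on `μˢᶜᵢ` and `μᵢ / μˢᶜᵢ ≤ A` for the argument `A`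
of the logarithm.
-/

open Real Finset

lemma eq_of_forall_mul_le_mul_exp_sub_one {a b s : ℝ} (hs : 0 < s)
    (h : ∀ t, -s ≤ t → b * t ≤ a * (exp t - 1)) : a = b := by
  have hmin : IsLocalMin (fun t => a * exp t - b * t) 0 := by
    filter_upwards [Ioi_mem_nhds (neg_neg_iff_pos.2 hs)] with t ht
    have := h t (le_of_lt ht)
    simp only [exp_zero, mul_one, mul_zero, sub_zero]
    linarith
  have hderiv : HasDerivAt (fun t => a * exp t - b * t) (a * exp 0 - b * 1) 0 :=
    ((hasDerivAt_exp 0).const_mul a).sub ((hasDerivAt_id' 0).const_mul b)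
  simpa [sub_eq_zero] using hmin.hasDerivAt_eq_zero hderiv

lemma mul_log_div_le {x y M A : ℝ} (hx : 0 < x) (hy : 0 < y) (hxM : x ≤ M) (hA : 1 ≤ A)
    (hxy : x ≤ A * y) : x * log (x / y) ≤ M * log A := by
  have hlog : log (x / y) ≤ log A := log_le_log (div_pos hx hy) ((div_le_iff₀ hy).2 hxy)
  rcases le_or_gt (log (x / y)) 0 with h | h
  · exact (mul_nonpos_of_nonneg_of_nonpos hx.le h).trans
      (mul_nonneg (hx.le.trans hxM) (log_nonneg hA))
  · exact mul_le_mul hxM hlog h.le (hx.le.trans hxM)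

section Finset

variable {α : Type*}

lemma card_mul_le_sum_mul {s : Finset α} {f g : α → ℝ} {x y : ℝ} (hx : 0 ≤ x) (hy : 0 ≤ y)
    (hf : ∀ i ∈ s, x ≤ f i) (hg : ∀ i ∈ s, y ≤ g i) : #s * (x * y) ≤ ∑ i ∈ s, f i * g i := by
  simpa using s.card_nsmul_le_sum _ _ fun i hi =>
    mul_le_mul (hf i hi) (hg i hi) hy (hx.trans (hf i hi))

lemma sum_le_card_mul_add_card_compl_mul [Fintype α] (s : Finset α) {f : α → ℝ} {A B : ℝ}
    (hA : ∀ i ∈ s, f i ≤ A) (hB : ∀ i ∉ s, f i ≤ B) :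
    ∑ i, f i ≤ #s * A + (Fintype.card α - #s) * B := by
  classical
  rw [← sum_add_sum_compl s]
  have hc : ((#sᶜ : ℕ) : ℝ) = Fintype.card α - #s := by
    rw [card_compl, Nat.cast_sub (card_le_univ s)]
  gcongr
  · simpa using s.sum_le_card_nsmul _ _ hA
  · simpa [hc] using sᶜ.sum_le_card_nsmul _ _ fun i hi => hB i (mem_compl.1 hi)

lemma sum_comp_update_sub [Fintype α] [DecidableEq α] (g : α → ℝ → ℝ) (u : α → ℝ) (i₀ : α)
    (x : ℝ) : ∑ i, g i (Function.update u i₀ x i) - ∑ i, g i (u i) = g i₀ x - g i₀ (u i₀) := by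
  rw [← sum_sub_distrib, sum_eq_single i₀ (fun i _ hi => by simp [Function.update_of_ne hi])
    (by simp)]
  simp

end Finset

section DualObjective

variable {ι ι' : Type*}

/-- The screened feasible set `F_sc` is `{(u, v) | ScreenedFeasible (ε / κ) I u ∧
ScreenedFeasible (ε * κ) J v}`. -/
def ScreenedFeasible (a : ℝ) (I : Finset ι) (u : ι → ℝ) : Prop :=
  (∀ i, a ≤ exp (u i)) ∧ ∀ i ∉ I, u i = log a

lemma ScreenedFeasible.exists_update [DecidableEq ι] {a : ℝ} {I : Finset ι} {u : ι → ℝ}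
    (h : ScreenedFeasible a I u) (ha : 0 < a) {i₀ : ι} (hi₀ : i₀ ∈ I) (hact : a < exp (u i₀)) :
    ∃ s > 0, ∀ t, -s ≤ t → ScreenedFeasible a I (Function.update u i₀ (u i₀ + t)) := by
  refine ⟨u i₀ - log a, sub_pos.2 ((log_lt_iff_lt_exp ha).2 hact), fun t ht => ⟨fun i => ?_, ?_⟩⟩
  · rcases eq_or_ne i i₀ with rfl | hi
    · rw [Function.update_self, ← log_le_iff_le_exp ha]; linarith
    · rw [Function.update_of_ne hi]; exact h.1 i
  · intro i hi
    rw [Function.update_of_ne (by rintro rfl; exact hi hi₀)]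
    exact h.2 i hi

variable [Fintype ι] [Fintype ι']

/-- The objective `Ψ_κ(u, v)`. -/
noncomputable def dualObjective (K : ι → ι' → ℝ) (μ : ι → ℝ) (ν : ι' → ℝ) (κ : ℝ)
    (u : ι → ℝ) (v : ι' → ℝ) : ℝ :=
  (∑ i, ∑ j, exp (u i) * K i j * exp (v j)) - κ * (∑ i, u i * μ i) - (1 / κ) * (∑ j, v j * ν j)

lemma dualObjective_transpose (K : ι → ι' → ℝ) (μ : ι → ℝ) (ν : ι' → ℝ) (κ : ℝ)
    (u : ι → ℝ) (v : ι' → ℝ) :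
    dualObjective K μ ν κ u v = dualObjective (fun j i => K i j) ν μ (1 / κ) v u := by
  have hswap : ∑ i, ∑ j, exp (u i) * K i j * exp (v j) = ∑ j, ∑ i, exp (v j) * K i j * exp (u i) :=
    sum_comm.trans (sum_congr rfl fun _ _ => sum_congr rfl fun _ _ => by ring)
  unfold dualObjective
  rw [hswap, one_div_one_div]
  ring

lemma dualObjective_update_left [DecidableEq ι] (K : ι → ι' → ℝ) (μ : ι → ℝ) (ν : ι' → ℝ)
    (κ : ℝ) (u : ι → ℝ) (v : ι' → ℝ) (i₀ : ι) (t : ℝ) :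
    dualObjective K μ ν κ (Function.update u i₀ (u i₀ + t)) v = dualObjective K μ ν κ u v
      + (exp t - 1) * ∑ j, exp (u i₀) * K i₀ j * exp (v j) - κ * (t * μ i₀) := by
  have hexp := sum_comp_update_sub (fun i x => ∑ j, exp x * K i j * exp (v j)) u i₀ (u i₀ + t)
  have hlin := sum_comp_update_sub (fun i x => x * μ i) u i₀ (u i₀ + t)
  have hscale : ∑ j, exp (u i₀ + t) * K i₀ j * exp (v j)
      = exp t * ∑ j, exp (u i₀) * K i₀ j * exp (v j) := by
    rw [mul_sum]; exact sum_congr rfl fun _ _ => by rw [exp_add]; ring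
  unfold dualObjective
  linear_combination hexp - κ * hlin + hscale

variable {K : ι → ι' → ℝ} {μ : ι → ℝ} {ν : ι' → ℝ} {κ a b : ℝ} {I : Finset ι} {J : Finset ι'}
  {u : ι → ℝ} {v : ι' → ℝ}

lemma row_sum_eq_of_isMinOn_dualObjective [DecidableEq ι]
    (hmin : IsMinOn (fun p => dualObjective K μ ν κ p.1 p.2)
      {p | ScreenedFeasible a I p.1 ∧ ScreenedFeasible b J p.2} (u, v))
    (hu : ScreenedFeasible a I u) (hv : ScreenedFeasible b J v) (ha : 0 < a) {i : ι} (hi : i ∈ I)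
    (hact : a < exp (u i)) :
    ∑ j, exp (u i) * K i j * exp (v j) = κ * μ i := by
  obtain ⟨s, hs, hfeas⟩ := hu.exists_update ha hi hact
  refine eq_of_forall_mul_le_mul_exp_sub_one hs fun t ht => ?_
  have := isMinOn_iff.1 hmin (Function.update u i (u i + t), v) ⟨hfeas t ht, hv⟩
  dsimp only at this
  rw [dualObjective_update_left] at this
  linarith

lemma col_sum_eq_of_isMinOn_dualObjective [DecidableEq ι']
    (hmin : IsMinOn (fun p => dualObjective K μ ν κ p.1 p.2)
      {p | ScreenedFeasible a I p.1 ∧ ScreenedFeasible b J p.2} (u, v))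
    (hu : ScreenedFeasible a I u) (hv : ScreenedFeasible b J v) (hb : 0 < b) {j : ι'} (hj : j ∈ J)
    (hact : b < exp (v j)) :
    ∑ i, exp (u i) * K i j * exp (v j) = ν j / κ := by
  obtain ⟨s, hs, hfeas⟩ := hv.exists_update hb hj hact
  have htrans : ∑ i, exp (v j) * K i j * exp (u i) = 1 / κ * ν j := by
    refine eq_of_forall_mul_le_mul_exp_sub_one hs fun t ht => ?_
    have := isMinOn_iff.1 hmin (u, Function.update v j (v j + t)) ⟨hu, hfeas t ht⟩
    dsimp only at this
    rw [dualObjective_transpose K, dualObjective_transpose K, dualObjective_update_left] at this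
    linarith
  rw [div_eq_inv_mul, ← one_div, ← htrans]
  exact sum_congr rfl fun _ _ => by ring

end DualObjective

lemma exp_le_div_of_sum_le {ι' : Type*} [Fintype ι'] [Nonempty ι'] {w c ε Kmin x : ℝ}
    {k z : ι' → ℝ} (hc : 0 < c) (hε : 0 < ε) (hKmin : 0 < Kmin) (hk : ∀ j, Kmin ≤ k j) (hz : ∀ j, ε * c ≤ exp (z j))
    (hsum : ∑ j, exp w * k j * exp (z j) ≤ c * x) :
    exp w ≤ x / (Fintype.card ι' * ε * Kmin) := by
  have hlow := card_mul_le_sum_mul (s := univ) (g := fun j => exp (z j)) hKmin.le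
    (by positivity) (fun j _ => hk j) (fun j _ => hz j)
  rw [card_univ] at hlow
  rw [le_div_iff₀ (by positivity)]
  refine le_of_mul_le_mul_left ?_ hc
  calc c * (exp w * (Fintype.card ι' * ε * Kmin))
      = exp w * (Fintype.card ι' * (Kmin * (ε * c))) := by ring
    _ ≤ exp w * ∑ j, k j * exp (z j) := by gcongr
    _ = ∑ j, exp w * k j * exp (z j) := by rw [mul_sum]; simp only [mul_assoc]
    _ ≤ c * x := hsum

section Bounds

variable {ι ι' : Type*} [Fintype ι] [Fintype ι'] {K : ι → ι' → ℝ} {u : ι → ℝ} {v : ι' → ℝ}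
  {ε κ Kmin : ℝ} {I : Finset ι} {J : Finset ι'}

lemma sum_exp_le_of_row_sum_eq [Nonempty ι'] {μ : ι → ℝ} {μmax : ℝ} (hε : 0 < ε) (hκ : 0 < κ)
    (hKmin : 0 < Kmin) (hK : ∀ i j, Kmin ≤ K i j) (hu : ∀ i ∉ I, u i = log (ε / κ))
    (hv : ∀ j, ε * κ ≤ exp (v j)) (hμ : ∀ i, μ i ≤ μmax)
    (hrow : ∀ i ∈ I, ∑ j, exp (u i) * K i j * exp (v j) = κ * μ i) :
    ∑ i, exp (u i) ≤ #I * (μmax / (Fintype.card ι' * ε * Kmin)) + (Fintype.card ι - #I) * (ε / κ) :=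
  sum_le_card_mul_add_card_compl_mul I
    (fun i hi => exp_le_div_of_sum_le hκ hε hKmin (hK i) hv
      ((hrow i hi).le.trans (mul_le_mul_of_nonneg_left (hμ i) hκ.le)))
    (fun i hi => by rw [hu i hi, exp_log (div_pos hε hκ)])

lemma card_mul_le_row_sum_of_col_sum_eq {ν : ι' → ℝ} {νmin : ℝ} (hε : 0 < ε) (hκ : 0 < κ)
    (hKmin : 0 < Kmin) (hK : ∀ i j, Kmin ≤ K i j) (hK1 : ∀ i j, K i j ≤ 1)
    (hu : ∀ i, ε / κ ≤ exp (u i)) (hS : 0 < ∑ i, exp (u i)) (hνmin : 0 ≤ νmin)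
    (hν : ∀ j ∈ J, νmin ≤ ν j) (hcol : ∀ j ∈ J, ∑ i, exp (u i) * K i j * exp (v j) = ν j / κ)
    (i : ι) :
    #J * (ε / κ * Kmin * (νmin / (κ * ∑ i, exp (u i)))) ≤ ∑ j, exp (u i) * K i j * exp (v j) := by
  have hv : ∀ j ∈ J, νmin / (κ * ∑ i, exp (u i)) ≤ exp (v j) := fun j hj => by
    have hle : ν j / κ ≤ (∑ i, exp (u i)) * exp (v j) := by
      rw [← hcol j hj, sum_mul]
      gcongr with i
      exact mul_le_of_le_one_right (exp_pos _).le (hK1 i j)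
    rw [div_le_iff₀ (by positivity)]
    rw [div_le_iff₀ hκ] at hle
    linarith [hν j hj]
  refine (card_mul_le_sum_mul (by positivity) (by positivity)
    (fun j _ => mul_le_mul (hu i) (hK i j) hKmin.le (exp_pos _).le) hv).trans
    (sum_le_sum_of_subset_of_nonneg (subset_univ J) fun j _ _ => ?_)
  have := hKmin.trans_le (hK i j)
  positivity

lemma row_sum_le_of_col_sum_eq [Nonempty ι] {ν : ι' → ℝ} {νmax : ℝ} (hε : 0 < ε) (hκ : 0 < κ)
    (hKmin : 0 < Kmin) (hK : ∀ i j, Kmin ≤ K i j) (hK1 : ∀ i j, K i j ≤ 1)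
    (hu : ScreenedFeasible (ε / κ) I u) (hv : ∀ j ∉ J, v j = log (ε * κ)) (hν : ∀ j, ν j ≤ νmax)
    (hcol : ∀ j ∈ J, ∑ i, exp (u i) * K i j * exp (v j) = ν j / κ) {i : ι} (hi : i ∉ I) :
    ∑ j, exp (u i) * K i j * exp (v j)
      ≤ #J * νmax / (Fintype.card ι * κ * Kmin) + (Fintype.card ι' - #J) * ε ^ 2 := by
  have hui : exp (u i) = ε / κ := by rw [hu.2 i hi, exp_log (div_pos hε hκ)]
  have hterm : ∀ j w, exp (v j) ≤ w → exp (u i) * K i j * exp (v j) ≤ ε / κ * w := fun j w hw =>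
    hui ▸ mul_le_mul (mul_le_of_le_one_right (by positivity) (hK1 i j)) hw (exp_pos _).le
      (by positivity)
  refine (sum_le_card_mul_add_card_compl_mul J (fun j hj => ?_) (fun j hj => ?_)).trans_eq
    (by rw [mul_div_assoc])
  · have hvj : exp (v j) ≤ νmax / (Fintype.card ι * ε * Kmin) := by
      refine (exp_le_div_of_sum_le (one_div_pos.2 hκ) hε hKmin (fun i => hK i j)
        (fun i => mul_one_div ε κ ▸ hu.1 i) ?_).trans
        (div_le_div_of_nonneg_right (hν j) (by positivity))
      rw [one_div_mul_eq_div, ← hcol j hj]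
      exact (sum_congr rfl fun _ _ => by ring).le
    convert hterm j _ hvj using 1
    field_simp
  · convert hterm j _ (by rw [hv j hj, exp_log (mul_pos hε hκ)]) using 1
    field_simp

/-- The argument of the logarithm is built so that, multiplied by the lower bound
`#J (ε/κ) Kmin νmin / (κ S)` on the screened marginal, it equals `μmax (S̄ + ε/κ) / S`,
where `S̄ ≥ S` is the upper bound on `S = ∑ᵢ e^{uᵢ}`. -/
lemma le_logArg_mul {n m nb mb μmax νmin S : ℝ} (hm : 0 < m) (hmb : 0 < mb)
    (hμmax : 0 < μmax) (hνmin : 0 < νmin) (hKmin : 0 < Kmin) (hε : 0 < ε) (hκ : 0 < κ)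
    (hS : 0 < S) (hSle : S ≤ nb * (μmax / (m * ε * Kmin)) + (n - nb) * (ε / κ)) :
    μmax ≤ (κ * (n - nb + 1) * μmax / (mb * Kmin * νmin)
        + nb * κ ^ 2 * μmax ^ 2 / (m * mb * ε ^ 2 * Kmin ^ 2 * νmin))
      * (mb * (ε / κ * Kmin * (νmin / (κ * S)))) := by
  have hexpand : (κ * (n - nb + 1) * μmax / (mb * Kmin * νmin)
        + nb * κ ^ 2 * μmax ^ 2 / (m * mb * ε ^ 2 * Kmin ^ 2 * νmin))
      * (mb * (ε / κ * Kmin * (νmin / (κ * S))))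
      = μmax * (nb * (μmax / (m * ε * Kmin)) + (n - nb) * (ε / κ) + ε / κ) / S := by
    field_simp; ring
  rw [hexpand, le_div_iff₀ hS]
  nlinarith [mul_le_mul_of_nonneg_left hSle hμmax.le, mul_pos hμmax (div_pos hε hκ)]

lemma le_logArg_mul_row_sum [Nonempty ι] [Nonempty ι'] {μ : ι → ℝ} {ν : ι' → ℝ} {μmax νmin : ℝ}
    (hε : 0 < ε) (hκ : 0 < κ) (hKmin : 0 < Kmin) (hK : ∀ i j, Kmin ≤ K i j)
    (hK1 : ∀ i j, K i j ≤ 1) (hu : ScreenedFeasible (ε / κ) I u) (hv : ∀ j, ε * κ ≤ exp (v j))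
    (hμmax : 0 < μmax) (hμ : ∀ i, μ i ≤ μmax) (hνmin : 0 < νmin) (hν : ∀ j ∈ J, νmin ≤ ν j)
    (hJ : J.Nonempty) (hrow : ∀ i ∈ I, ∑ j, exp (u i) * K i j * exp (v j) = κ * μ i)
    (hcol : ∀ j ∈ J, ∑ i, exp (u i) * K i j * exp (v j) = ν j / κ) (i : ι) :
    μ i ≤ (κ * (Fintype.card ι - #I + 1) * μmax / (#J * Kmin * νmin)
        + #I * κ ^ 2 * μmax ^ 2 / (Fintype.card ι' * #J * ε ^ 2 * Kmin ^ 2 * νmin))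
      * ∑ j, exp (u i) * K i j * exp (v j) := by
  have hS : 0 < ∑ i, exp (u i) := sum_pos (fun i _ => exp_pos _) univ_nonempty
  have hI : (#I : ℝ) ≤ Fintype.card ι := by exact_mod_cast card_le_univ I
  have hA : 0 ≤ κ * (Fintype.card ι - #I + 1) * μmax / (#J * Kmin * νmin)
      + #I * κ ^ 2 * μmax ^ 2 / (Fintype.card ι' * #J * ε ^ 2 * Kmin ^ 2 * νmin) := by
    have : (0 : ℝ) ≤ Fintype.card ι - #I + 1 := by linarith
    positivity
  calc μ i ≤ μmax := hμ i
    _ ≤ _ := le_logArg_mul (by exact_mod_cast Fintype.card_pos) (by exact_mod_cast hJ.card_pos)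
        hμmax hνmin hKmin hε hκ hS (sum_exp_le_of_row_sum_eq hε hκ hKmin hK hu.2 hv hμ hrow)
    _ ≤ _ := mul_le_mul_of_nonneg_left (card_mul_le_row_sum_of_col_sum_eq hε hκ hKmin hK hK1 hu.1
        hS hνmin.le hν hcol i) hA

end Bounds

lemma sum_sub_add_mul_log_div_le {ι : Type*} [Fintype ι] (I : Finset ι) {x y : ι → ℝ}
    {κ M m₀ U A : ℝ} (hκ : 0 < κ) (hx : ∀ i, 0 < x i) (hxM : ∀ i, x i ≤ M) (hm₀ : ∀ i, m₀ ≤ x i)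
    (hA : 1 ≤ A) (hxy : ∀ i, x i ≤ A * y i) (hI : ∀ i ∈ I, y i = κ * x i)
    (hU : ∀ i ∉ I, y i ≤ U) :
    ∑ i, (y i - x i + x i * log (x i / y i))
      ≤ #I * ((κ - log κ - 1) * M) + (Fintype.card ι - #I) * (U - m₀ + M * log A) := by
  refine sum_le_card_mul_add_card_compl_mul I (fun i hi => ?_) (fun i hi => ?_)
  · rw [hI i hi, div_mul_cancel_right₀ (hx i).ne', log_inv]
    have : 0 ≤ κ - log κ - 1 := by linarith [log_le_sub_one_of_pos hκ]
    nlinarith [hxM i]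
  · have hy : 0 < y i := pos_of_mul_pos_right ((hx i).trans_le (hxy i)) (by linarith)
    linarith [mul_log_div_le (hx i) hy (hxM i) hA (hxy i), hU i hi, hm₀ i]

theorem divergence_bound_mu_general
    (n m : ℕ) (hn : 0 < n) (hm : 0 < m)
    (C : Fin n → Fin m → ℝ) (hC : ∀ i j, 0 ≤ C i j)
    (η : ℝ) (hη : 0 < η)
    (K : Fin n → Fin m → ℝ) (hK : ∀ i j, K i j = Real.exp (-(C i j) / η))
    (μ : Fin n → ℝ) (ν : Fin m → ℝ)
    (hμpos : ∀ i, 0 < μ i) (hνpos : ∀ j, 0 < ν j)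
    (ε κ : ℝ) (hε : 0 < ε) (hκ : 0 < κ)
    (I : Finset (Fin n))
    (J : Finset (Fin m))
    (hJne : J.Nonempty)
    (Kmin : ℝ) (hKmin_le : ∀ i j, Kmin ≤ K i j) (hKmin_mem : ∃ i j, K i j = Kmin)
    (usc : Fin n → ℝ) (vsc : Fin m → ℝ)
    (husc_feas : ∀ i, ε / κ ≤ Real.exp (usc i))
    (hvsc_feas : ∀ j, ε * κ ≤ Real.exp (vsc j))
    (husc_out : ∀ i ∉ I, usc i = Real.log (ε / κ))
    (hvsc_out : ∀ j ∉ J, vsc j = Real.log (ε * κ))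
    (hsc_min : ∀ (u : Fin n → ℝ) (v : Fin m → ℝ),
      (∀ i, ε / κ ≤ Real.exp (u i)) → (∀ j, ε * κ ≤ Real.exp (v j)) →
      (∀ i ∉ I, u i = Real.log (ε / κ)) → (∀ j ∉ J, v j = Real.log (ε * κ)) →
      (∑ i, ∑ j, Real.exp (usc i) * K i j * Real.exp (vsc j))
          - κ * (∑ i, usc i * μ i) - (1 / κ) * (∑ j, vsc j * ν j)
        ≤ (∑ i, ∑ j, Real.exp (u i) * K i j * Real.exp (v j))
          - κ * (∑ i, u i * μ i) - (1 / κ) * (∑ j, v j * ν j))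
    (hactive_u : ∀ i ∈ I, ε / κ < Real.exp (usc i))
    (hactive_v : ∀ j ∈ J, ε * κ < Real.exp (vsc j))
    (μsc : Fin n → ℝ)
    (hμsc : ∀ i, μsc i = ∑ j, Real.exp (usc i) * K i j * Real.exp (vsc j))
    (μmax μmin νmax νminJ : ℝ)
    (hμmax : (∃ i, μ i = μmax) ∧ ∀ i, μ i ≤ μmax)
    (hμmin : (∃ i, μ i = μmin) ∧ ∀ i, μmin ≤ μ i)
    (hνmax : (∃ j, ν j = νmax) ∧ ∀ j, ν j ≤ νmax)
    (hνminJ : (∃ j ∈ J, ν j = νminJ) ∧ ∀ j ∈ J, νminJ ≤ ν j)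
    (hlogarg : 1 ≤ (κ * ((n : ℝ) - I.card + 1) * μmax / ((J.card : ℝ) * Kmin * νminJ)
              + (I.card : ℝ) * κ ^ 2 * μmax ^ 2
                / ((m : ℝ) * J.card * ε ^ 2 * Kmin ^ 2 * νminJ)))
    :
    ∑ i, (μsc i - μ i + μ i * Real.log (μ i / μsc i)) ≤
      (I.card : ℝ) * (κ - Real.log κ - 1) * μmax
        + ((n : ℝ) - I.card) *
          ((J.card : ℝ) * νmax / ((n : ℝ) * κ * Kmin)
            + ((m : ℝ) - J.card) * ε ^ 2 - μmin
            + μmax * Real.log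
                (κ * ((n : ℝ) - I.card + 1) * μmax / ((J.card : ℝ) * Kmin * νminJ)
              + (I.card : ℝ) * κ ^ 2 * μmax ^ 2
                / ((m : ℝ) * J.card * ε ^ 2 * Kmin ^ 2 * νminJ))) := by
  have hKpos : ∀ i j, 0 < K i j := fun i j => hK i j ▸ exp_pos _
  have hK1 : ∀ i j, K i j ≤ 1 := fun i j => by
    rw [hK, exp_le_one_iff]; exact div_nonpos_of_nonpos_of_nonneg (neg_nonpos.2 (hC i j)) hη.le
  obtain ⟨i₁, j₁, hKmin⟩ := hKmin_mem
  have hKmin_pos : 0 < Kmin := hKmin ▸ hKpos i₁ j₁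
  obtain ⟨j₂, -, hνmin⟩ := hνminJ.1
  have : Nonempty (Fin n) := ⟨⟨0, hn⟩⟩
  have : Nonempty (Fin m) := ⟨⟨0, hm⟩⟩
  have hu : ScreenedFeasible (ε / κ) I usc := ⟨husc_feas, husc_out⟩
  have hv : ScreenedFeasible (ε * κ) J vsc := ⟨hvsc_feas, hvsc_out⟩
  have hmin : IsMinOn (fun p => dualObjective K μ ν κ p.1 p.2)
      {p | ScreenedFeasible (ε / κ) I p.1 ∧ ScreenedFeasible (ε * κ) J p.2} (usc, vsc) :=
    isMinOn_iff.2 fun p hp => hsc_min p.1 p.2 hp.1.1 hp.2.1 hp.1.2 hp.2.2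
  have hrow : ∀ i ∈ I, ∑ j, exp (usc i) * K i j * exp (vsc j) = κ * μ i := fun i hi =>
    row_sum_eq_of_isMinOn_dualObjective hmin hu hv (by positivity) hi (hactive_u i hi)
  have hcol : ∀ j ∈ J, ∑ i, exp (usc i) * K i j * exp (vsc j) = ν j / κ := fun j hj =>
    col_sum_eq_of_isMinOn_dualObjective hmin hu hv (by positivity) hj (hactive_v j hj)
  have hratio := le_logArg_mul_row_sum hε hκ hKmin_pos hKmin_le hK1 hu hvsc_feas
    ((hμpos i₁).trans_le (hμmax.2 i₁)) hμmax.2 (hνmin ▸ hνpos j₂) hνminJ.2 hJne hrow hcol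
  have hupper := fun i => row_sum_le_of_col_sum_eq (i := i) hε hκ hKmin_pos hKmin_le hK1 hu
    hvsc_out hνmax.2 hcol
  simp only [Fintype.card_fin, ← hμsc] at hratio hupper
  refine (sum_sub_add_mul_log_div_le I hκ hμpos hμmax.2 hμmin.2 hlogarg hratio
    (fun i hi => (hμsc i).trans (hrow i hi)) hupper).trans_eq ?_
  rw [Fintype.card_fin]
  ring

theorem divergence_bound_mu
    (n m : ℕ) (hn : 0 < n) (hm : 0 < m)
    (C : Fin n → Fin m → ℝ) (hC : ∀ i j, 0 ≤ C i j)
    (η : ℝ) (hη : 0 < η)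
    (K : Fin n → Fin m → ℝ) (hK : ∀ i j, K i j = Real.exp (-(C i j) / η))
    (μ : Fin n → ℝ) (ν : Fin m → ℝ)
    (hμpos : ∀ i, 0 < μ i) (hνpos : ∀ j, 0 < ν j)
    (hμsum : ∑ i, μ i = 1) (hνsum : ∑ j, ν j = 1)
    (ε κ : ℝ) (hε : 0 < ε) (hκ : 0 < κ)
    (I : Finset (Fin n)) (hI : ∀ i, i ∈ I ↔ ε ^ 2 / κ * (∑ j, K i j) ≤ μ i)
    (J : Finset (Fin m)) (hJ : ∀ j, j ∈ J ↔ κ * ε ^ 2 * (∑ i, K i j) ≤ ν j)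
    (hIne : I.Nonempty) (hJne : J.Nonempty)
    (Kmin : ℝ) (hKmin_le : ∀ i j, Kmin ≤ K i j) (hKmin_mem : ∃ i j, K i j = Kmin)
    (usc : Fin n → ℝ) (vsc : Fin m → ℝ)
    (husc_feas : ∀ i, ε / κ ≤ Real.exp (usc i))
    (hvsc_feas : ∀ j, ε * κ ≤ Real.exp (vsc j))
    (husc_out : ∀ i ∉ I, usc i = Real.log (ε / κ))
    (hvsc_out : ∀ j ∉ J, vsc j = Real.log (ε * κ))
    (hsc_min : ∀ (u : Fin n → ℝ) (v : Fin m → ℝ),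
      (∀ i, ε / κ ≤ Real.exp (u i)) → (∀ j, ε * κ ≤ Real.exp (v j)) →
      (∀ i ∉ I, u i = Real.log (ε / κ)) → (∀ j ∉ J, v j = Real.log (ε * κ)) →
      (∑ i, ∑ j, Real.exp (usc i) * K i j * Real.exp (vsc j))
          - κ * (∑ i, usc i * μ i) - (1 / κ) * (∑ j, vsc j * ν j)
        ≤ (∑ i, ∑ j, Real.exp (u i) * K i j * Real.exp (v j))
          - κ * (∑ i, u i * μ i) - (1 / κ) * (∑ j, v j * ν j))
    (hactive_u : ∀ i ∈ I, ε / κ < Real.exp (usc i))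
    (hactive_v : ∀ j ∈ J, ε * κ < Real.exp (vsc j))
    (μsc : Fin n → ℝ)
    (hμsc : ∀ i, μsc i = ∑ j, Real.exp (usc i) * K i j * Real.exp (vsc j))
    (μmax μmin νmax νminJ : ℝ)
    (hμmax : (∃ i, μ i = μmax) ∧ ∀ i, μ i ≤ μmax)
    (hμmin : (∃ i, μ i = μmin) ∧ ∀ i, μmin ≤ μ i)
    (hνmax : (∃ j, ν j = νmax) ∧ ∀ j, ν j ≤ νmax)
    (hνminJ : (∃ j ∈ J, ν j = νminJ) ∧ ∀ j ∈ J, νminJ ≤ ν j)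
    (hlogarg : 1 ≤ (κ * ((n : ℝ) - I.card + 1) * μmax / ((J.card : ℝ) * Kmin * νminJ)
              + (I.card : ℝ) * κ ^ 2 * μmax ^ 2
                / ((m : ℝ) * J.card * ε ^ 2 * Kmin ^ 2 * νminJ)))
    :
    ∑ i, (μsc i - μ i + μ i * Real.log (μ i / μsc i)) ≤
      (I.card : ℝ) * (κ - Real.log κ - 1) * μmax
        + ((n : ℝ) - I.card) *
          ((J.card : ℝ) * νmax / ((n : ℝ) * κ * Kmin)
            + ((m : ℝ) - J.card) * ε ^ 2 - μmin
            + μmax * Real.log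
                (κ * ((n : ℝ) - I.card + 1) * μmax / ((J.card : ℝ) * Kmin * νminJ)
              + (I.card : ℝ) * κ ^ 2 * μmax ^ 2
                / ((m : ℝ) * J.card * ε ^ 2 * Kmin ^ 2 * νminJ))) :=
  divergence_bound_mu_general n m hn hm C hC η hη K hK μ ν hμpos hνpos ε κ hε hκ I J hJne Kmin
    hKmin_le hKmin_mem usc vsc husc_feas hvsc_feas husc_out hvsc_out hsc_min hactive_u hactive_v μsc
    hμsc μmax μmin νmax νminJ hμmax hμmin hνmax hνminJ hlogarg
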